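/- Let ι be a finite index type with decidable equality, let γ : ι → Type be a family of finite types with decidable equality, let n > 0, let d : Fin n → (Π i, γ i) be a data sample, and let y : Fin n → β for a finite type β with decidable equality. For a subset S ⊆ ι write x_S : Fin n → (Π i ∈ S, γ i) for the restriction of the sample to the attributes in S. Then for all subsets S ⊆ S' ⊆ ι, the permutation-model correction term is monotonically increasing with respect to the subset relation: m̂₀(x_S, y) ≤ m̂₀(x_{S'}, y). -/

import Mathlib

open Finset

/-- Empirical mutual information between `x : Fin n → α` and `y : Fin n → β`,
`Î(x,y) = Σ_{v,w} (c(v,w)/n)·log(c(v,w)·n/(a(v)·b(w)))`, terms with `c(v,w)=0` being `0`. -/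
noncomputable def empMI {n : ℕ} {α β : Type*} [Fintype α] [DecidableEq α]
    [Fintype β] [DecidableEq β] (x : Fin n → α) (y : Fin n → β) : ℝ :=
  ∑ v : α, ∑ w : β,
    (((univ.filter fun t => x t = v ∧ y t = w).card : ℝ) / n) *
      Real.log ((((univ.filter fun t => x t = v ∧ y t = w).card : ℝ) * n) /
        (((univ.filter fun t => x t = v).card : ℝ) *
          ((univ.filter fun t => y t = w).card : ℝ)))

/-- Permutation-model expectation of the empirical mutual information:
`m̂₀(x,y) = (1/n!)·Σ_{σ ∈ Perm(Fin n)} Î(x, y∘σ)`. -/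
noncomputable def permExpMI {n : ℕ} {α β : Type*} [Fintype α] [DecidableEq α]
    [Fintype β] [DecidableEq β] (x : Fin n → α) (y : Fin n → β) : ℝ :=
  (1 / (n.factorial : ℝ)) * ∑ σ : Equiv.Perm (Fin n), empMI x (y ∘ σ)

/-- Restriction `x_S` of the sample `d` to the attributes in `S`. -/
def restrictSample {ι : Type*} {γ : ι → Type*} {n : ℕ} (d : Fin n → ∀ i, γ i)
    (S : Finset ι) : Fin n → (∀ i : S, γ i) := fun t i => d t i

/-! Passing to fewer attributes coarsens the first argument, `x_S = π ∘ x_{S'}`, so it suffices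
that `Î(f ∘ x, y) ≤ Î(x, y)` for every `f` (applied to each `y ∘ σ`). For fixed `(v, w)`, the counts
of `f ∘ x` are sums over the fibre `f⁻¹ v` of the counts of `x`, and the log-sum inequality bounds
the `(v, w)` summand of `Î(f ∘ x, y)` by the sum of the corresponding summands of `Î(x, y)`. -/

open Real

lemma mul_log_add_sub_mul_le_mul_log_div {a b r : ℝ} (ha : 0 ≤ a) (hb : 0 ≤ b)
    (hab : b = 0 → a = 0) (hr : 0 < r) :
    a * log r + a - b * r ≤ a * log (a / b) := by
  rcases ha.eq_or_lt with rfl | ha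
  · simpa using mul_nonneg hb hr.le
  have hb : 0 < b := hb.lt_of_ne fun h => ha.ne' (hab h.symm)
  have key := one_sub_inv_le_log_of_pos (show 0 < a / (b * r) by positivity)
  rw [log_div ha.ne' (by positivity), log_mul hb.ne' hr.ne', inv_div] at key
  rw [log_div ha.ne' hb.ne']
  have := mul_le_mul_of_nonneg_left key ha.le
  rw [mul_sub, mul_one, mul_div_cancel₀ _ ha.ne'] at this
  linarith

/-- The log-sum inequality. -/
theorem sum_mul_log_div_sum_le {ι : Type*} (s : Finset ι) (a b : ι → ℝ)
    (ha : ∀ i ∈ s, 0 ≤ a i) (hb : ∀ i ∈ s, 0 ≤ b i) (hab : ∀ i ∈ s, b i = 0 → a i = 0) :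
    (∑ i ∈ s, a i) * log ((∑ i ∈ s, a i) / ∑ i ∈ s, b i) ≤
      ∑ i ∈ s, a i * log (a i / b i) := by
  set A := ∑ i ∈ s, a i
  set B := ∑ i ∈ s, b i
  rcases (sum_nonneg ha).eq_or_lt with hA | hA
  · have ha0 : ∀ i ∈ s, a i = 0 := (sum_eq_zero_iff_of_nonneg ha).mp hA.symm
    rw [show A = 0 from hA.symm, zero_mul, sum_eq_zero fun i hi => by rw [ha0 i hi, zero_mul]]
  have hB : 0 < B := by
    refine (sum_nonneg hb).lt_of_ne fun hB => hA.ne' (sum_eq_zero fun i hi => hab i hi ?_)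
    exact (sum_eq_zero_iff_of_nonneg hb).mp hB.symm i hi
  calc A * log (A / B) = ∑ i ∈ s, (a i * log (A / B) + a i - b i * (A / B)) := by
        rw [sum_sub_distrib, sum_add_distrib, ← sum_mul, ← sum_mul]
        field_simp
        ring
    _ ≤ ∑ i ∈ s, a i * log (a i / b i) := sum_le_sum fun i hi =>
        mul_log_add_sub_mul_le_mul_log_div (ha i hi) (hb i hi) (hab i hi) (by positivity)

/-- The `(v, w)` summand of `empMI` in terms of `c = c(v,w)`, `a = a(v)` and `b = b(w)`. -/
noncomputable def empMITerm (n : ℕ) (c a b : ℝ) : ℝ :=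
  c / n * log (c * n / (a * b))

lemma empMITerm_eq (n : ℕ) (c a b : ℝ) :
    empMITerm n c a b = c * log (c / (a * b / n)) / n := by
  rw [empMITerm, div_div_eq_mul_div, div_mul_eq_mul_div]

lemma empMITerm_sum_le {ι : Type*} (n : ℕ) (s : Finset ι) (c a : ι → ℝ) (b : ℝ)
    (hc : ∀ i ∈ s, 0 ≤ c i) (hca : ∀ i ∈ s, c i ≤ a i) (hcb : ∀ i ∈ s, c i ≤ b) :
    empMITerm n (∑ i ∈ s, c i) (∑ i ∈ s, a i) b ≤ ∑ i ∈ s, empMITerm n (c i) (a i) b := by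
  rcases n.eq_zero_or_pos with rfl | hn
  · simp [empMITerm]
  have hn : (0 : ℝ) < n := by exact_mod_cast hn
  have key := sum_mul_log_div_sum_le s c (fun i => a i * b / n) hc
    (fun i hi => div_nonneg
      (mul_nonneg ((hc i hi).trans (hca i hi)) ((hc i hi).trans (hcb i hi))) hn.le)
    (fun i hi h => by
      rcases mul_eq_zero.mp ((div_eq_zero_iff.mp h).resolve_right hn.ne') with h | h
      · exact le_antisymm (h ▸ hca i hi) (hc i hi)
      · exact le_antisymm (h ▸ hcb i hi) (hc i hi))
  rw [← sum_div, ← sum_mul] at key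
  simp_rw [empMITerm_eq, ← sum_div]
  gcongr

lemma card_filter_comp_eq_sum {ι α α' : Type*} [Fintype α'] [DecidableEq α] [DecidableEq α']
    (s : Finset ι) (f : α' → α) (x : ι → α') (p : ι → Prop) [DecidablePred p] (v : α) :
    #{t ∈ s | f (x t) = v ∧ p t} = ∑ u with f u = v, #{t ∈ s | x t = u ∧ p t} := by
  rw [card_eq_sum_card_fiberwise (f := x) (t := {u | f u = v}) (fun t ht => by simp_all)]
  refine sum_congr rfl fun u hu => ?_
  rw [filter_filter]
  refine congrArg card (filter_congr fun t _ => ?_)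
  grind

theorem empMI_comp_le {n : ℕ} {α α' β : Type*} [Fintype α] [DecidableEq α]
    [Fintype α'] [DecidableEq α'] [Fintype β] [DecidableEq β]
    (f : α' → α) (x : Fin n → α') (y : Fin n → β) :
    empMI (f ∘ x) y ≤ empMI x y := by
  unfold empMI
  rw [← sum_fiberwise univ f]
  gcongr with v
  rw [sum_comm]
  gcongr with w
  have hjoint := card_filter_comp_eq_sum univ f x (fun t => y t = w) v
  have hmarg := card_filter_comp_eq_sum univ f x (fun _ => True) v
  simp only [and_true] at hmarg
  simp only [Function.comp_apply, hjoint, hmarg, Nat.cast_sum]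
  exact empMITerm_sum_le n _ _ _ _ (fun _ _ => by positivity)
    (fun _ _ => by gcongr; exact And.left)
    (fun _ _ => by gcongr; exact And.right)

theorem permExpMI_comp_le {n : ℕ} {α α' β : Type*} [Fintype α] [DecidableEq α]
    [Fintype α'] [DecidableEq α'] [Fintype β] [DecidableEq β]
    (f : α' → α) (x : Fin n → α') (y : Fin n → β) :
    permExpMI (f ∘ x) y ≤ permExpMI x y := by
  unfold permExpMI
  gcongr with σ
  exact empMI_comp_le f x (y ∘ σ)

theorem permExpMI_mono_subset_general {ι : Type*} [DecidableEq ι]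
    {γ : ι → Type*} [∀ i, Fintype (γ i)] [∀ i, DecidableEq (γ i)]
    {n : ℕ} (d : Fin n → ∀ i, γ i)
    {β : Type*} [Fintype β] [DecidableEq β] (y : Fin n → β)
    (S S' : Finset ι) (hSS' : S ⊆ S') :
    permExpMI (restrictSample d S) y ≤ permExpMI (restrictSample d S') y := by
  have hrestrict : restrictSample d S =
      (fun (g : ∀ i : S', γ i) (i : S) => g ⟨i, hSS' i.2⟩) ∘ restrictSample d S' := rfl
  rw [hrestrict]
  exact permExpMI_comp_le _ _ y

/-- The permutation-model correction term is monotonically increasing with respect to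
the subset relation on attribute sets: for `S ⊆ S'`, `m̂₀(x_S, y) ≤ m̂₀(x_{S'}, y)`. -/
theorem permExpMI_mono_subset {ι : Type*} [Fintype ι] [DecidableEq ι]
    {γ : ι → Type*} [∀ i, Fintype (γ i)] [∀ i, DecidableEq (γ i)]
    {n : ℕ} (hn : 0 < n) (d : Fin n → ∀ i, γ i)
    {β : Type*} [Fintype β] [DecidableEq β] (y : Fin n → β)
    (S S' : Finset ι) (hSS' : S ⊆ S') :
    permExpMI (restrictSample d S) y ≤ permExpMI (restrictSample d S') y :=
  permExpMI_mono_subset_general d y S S' hSS'
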